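/- arXiv:2210.08938 — 5 statements merged into one kernel-verified Lean document; each statement's English description precedes it below -/
import Mathlib

section
/- Let G be a group, let R, S, T be G-sets, and let φ : R → S and ψ : R → T be G-equivariant maps. Let Z be the pushout of φ and ψ in the category of G-sets, i.e. the quotient of the disjoint union S ⊔ T by the equivalence relation generated by φ(r) ~ ψ(r) for all r ∈ R, with canonical G-maps ι : S → Z and ȷ : T → Z. Suppose there is r ∈ R with R = G·r, and set s = φ(r), t = ψ(r), z = ι(s). Then the G-stabilizer G_z equals the subgroup ⟨G_s, G_t⟩ of G generated by the stabilizers G_s and G_t. -/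
/-- The relation generating the pushout of two maps `φ : R → S` and `ψ : R → T`:
`φ r ~ ψ r` inside the disjoint union `S ⊔ T`. -/
def PushoutRel {R S T : Type*} (φ : R → S) (ψ : R → T) : S ⊕ T → S ⊕ T → Prop :=
  fun a b => ∃ r : R, a = Sum.inl (φ r) ∧ b = Sum.inr (ψ r)

/-- The pushout `Z` of `φ` and `ψ` in the category of sets: the quotient of the disjoint
union `S ⊔ T` by the equivalence relation generated by `φ r ~ ψ r` for all `r ∈ R`. -/
def SetPushout {R S T : Type*} (φ : R → S) (ψ : R → T) : Type _ :=
  Quot (PushoutRel φ ψ)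

/-- The canonical map `ι : S → Z`. -/
def SetPushout.inl {R S T : Type*} (φ : R → S) (ψ : R → T) (s : S) : SetPushout φ ψ :=
  Quot.mk _ (Sum.inl s)

/-- The canonical map `ȷ : T → Z`. -/
def SetPushout.inr {R S T : Type*} (φ : R → S) (ψ : R → T) (t : T) : SetPushout φ ψ :=
  Quot.mk _ (Sum.inr t)

/-- The `G`-action on the pushout `Z`, well defined since `φ` and `ψ` are `G`-equivariant. -/
def SetPushout.smul {G R S T : Type*} [Group G] [MulAction G R] [MulAction G S] [MulAction G T]
    {φ : R → S} {ψ : R → T}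
    (hφ : ∀ (g : G) (r : R), φ (g • r) = g • φ r)
    (hψ : ∀ (g : G) (r : R), ψ (g • r) = g • ψ r)
    (g : G) : SetPushout φ ψ → SetPushout φ ψ :=
  Quot.map (fun a => g • a) (by
    rintro a b ⟨r, rfl, rfl⟩
    exact ⟨g • r, by simp [hφ], by simp [hψ]⟩)

/-- Let `Z` be the pushout of `G`-maps `φ : R → S` and `ψ : R → T` in the
category of `G`-sets.  If `R = G·r`, and `s = φ r`, `t = ψ r`, `z = ι s`, then the
`G`-stabilizer of `z` equals the subgroup `⟨G_s, G_t⟩` generated by the stabilizers of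
`s` and `t`. -/
theorem setPushout_stabilizer_eq_sup
    {G R S T : Type*} [Group G] [MulAction G R] [MulAction G S] [MulAction G T]
    (φ : R → S) (ψ : R → T)
    (hφ : ∀ (g : G) (r : R), φ (g • r) = g • φ r)
    (hψ : ∀ (g : G) (r : R), ψ (g • r) = g • ψ r)
    (r : R) (hr : ∀ r' : R, r' ∈ MulAction.orbit G r)
    (s : S) (t : T) (z : SetPushout φ ψ)
    (hs : s = φ r) (ht : t = ψ r) (hz : z = SetPushout.inl φ ψ s) :
    {g : G | SetPushout.smul hφ hψ g z = z} =
      ↑(MulAction.stabilizer G s ⊔ MulAction.stabilizer G t : Subgroup G) := by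
  classical
  subst hs; subst ht; subst hz
  set H : Subgroup G := MulAction.stabilizer G (φ r) ⊔ MulAction.stabilizer G (ψ r) with hH
  have smul_mk : ∀ (g : G) (a : S ⊕ T),
      SetPushout.smul hφ hψ g (Quot.mk _ a) = Quot.mk _ (g • a) := fun g a => rfl
  -- an invariant map to cosets
  let F : S ⊕ T → Option (G ⧸ H) := fun a =>
    match a with
    | Sum.inl x => if h : ∃ g : G, g • (φ r) = x then some (QuotientGroup.mk h.choose) else none
    | Sum.inr y => if h : ∃ g : G, g • (ψ r) = y then some (QuotientGroup.mk h.choose) else none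
  have Fl : ∀ c : G, F (Sum.inl (c • φ r)) = some (QuotientGroup.mk (s := H) c) := by
    intro c
    have h : ∃ g : G, g • (φ r) = c • φ r := ⟨c, rfl⟩
    have hc := h.choose_spec
    simp only [F, dif_pos h]
    congr 1
    apply QuotientGroup.eq.mpr
    apply Subgroup.mem_sup_left
    rw [MulAction.mem_stabilizer_iff, mul_smul]
    exact inv_smul_eq_iff.mpr hc.symm
  have Fr : ∀ c : G, F (Sum.inr (c • ψ r)) = some (QuotientGroup.mk (s := H) c) := by
    intro c
    have h : ∃ g : G, g • (ψ r) = c • ψ r := ⟨c, rfl⟩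
    have hc := h.choose_spec
    simp only [F, dif_pos h]
    congr 1
    apply QuotientGroup.eq.mpr
    apply Subgroup.mem_sup_right
    rw [MulAction.mem_stabilizer_iff, mul_smul]
    exact inv_smul_eq_iff.mpr hc.symm
  have Fresp : ∀ a b : S ⊕ T, PushoutRel φ ψ a b → F a = F b := by
    rintro a b ⟨r', rfl, rfl⟩
    obtain ⟨c, rfl⟩ := MulAction.mem_orbit_iff.mp (hr r')
    rw [hφ, hψ, Fl, Fr]
  let Fbar : SetPushout φ ψ → Option (G ⧸ H) := Quot.lift F Fresp
  ext g
  constructor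
  · intro hg
    have h1 : Fbar (SetPushout.smul hφ hψ g (SetPushout.inl φ ψ (φ r)))
        = Fbar (SetPushout.inl φ ψ (φ r)) := congrArg Fbar hg
    have h2 : Fbar (SetPushout.smul hφ hψ g (SetPushout.inl φ ψ (φ r)))
        = some (QuotientGroup.mk (s := H) g) := by
      show Fbar (Quot.mk _ (g • (Sum.inl (φ r) : S ⊕ T))) = _
      rw [Sum.smul_inl]
      exact Fl g
    have h3 : Fbar (SetPushout.inl φ ψ (φ r)) = some (QuotientGroup.mk (s := H) 1) := by
      show F (Sum.inl (φ r)) = _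
      have := Fl 1
      rwa [one_smul] at this
    rw [h2, h3] at h1
    have : QuotientGroup.mk (s := H) g = QuotientGroup.mk 1 := Option.some_injective _ h1
    have hmem : g⁻¹ * 1 ∈ H := QuotientGroup.eq.mp this
    rw [mul_one] at hmem
    exact SetLike.mem_coe.mpr ((inv_mem_iff).mp hmem)
  · intro hg
    have zeq : SetPushout.inl φ ψ (φ r) = Quot.mk (PushoutRel φ ψ) (Sum.inr (ψ r)) :=
      Quot.sound ⟨r, rfl, rfl⟩
    let K : Subgroup G :=
      { carrier := {g : G | SetPushout.smul hφ hψ g (SetPushout.inl φ ψ (φ r))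
          = SetPushout.inl φ ψ (φ r)}
        one_mem' := by
          show SetPushout.smul hφ hψ 1 (Quot.mk _ (Sum.inl (φ r))) = _
          rw [smul_mk, one_smul]
          rfl
        mul_mem' := by
          intro a b ha hb
          show SetPushout.smul hφ hψ (a * b) (SetPushout.inl φ ψ (φ r)) = _
          have comp : ∀ x : SetPushout φ ψ, SetPushout.smul hφ hψ (a * b) x
              = SetPushout.smul hφ hψ a (SetPushout.smul hφ hψ b x) := by
            intro x
            induction x using Quot.ind with
            | _ y => rw [smul_mk, smul_mk, smul_mk, mul_smul]
          rw [comp]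
          rw [show SetPushout.smul hφ hψ b (SetPushout.inl φ ψ (φ r))
              = SetPushout.inl φ ψ (φ r) from hb]
          exact ha
        inv_mem' := by
          intro a ha
          have ha' : SetPushout.smul hφ hψ a (SetPushout.inl φ ψ (φ r))
              = SetPushout.inl φ ψ (φ r) := ha
          show SetPushout.smul hφ hψ a⁻¹ (SetPushout.inl φ ψ (φ r)) = _
          conv_lhs => rw [← ha']
          show SetPushout.smul hφ hψ a⁻¹
              (SetPushout.smul hφ hψ a (Quot.mk _ (Sum.inl (φ r)))) = _
          rw [smul_mk, smul_mk, inv_smul_smul]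
          rfl }
    have h1 : MulAction.stabilizer G (φ r) ≤ K := by
      intro a ha
      show SetPushout.smul hφ hψ a (Quot.mk _ (Sum.inl (φ r))) = _
      rw [smul_mk, Sum.smul_inl, MulAction.mem_stabilizer_iff.mp ha]
      rfl
    have h2 : MulAction.stabilizer G (ψ r) ≤ K := by
      intro a ha
      show SetPushout.smul hφ hψ a (SetPushout.inl φ ψ (φ r)) = _
      rw [zeq, smul_mk, Sum.smul_inr, MulAction.mem_stabilizer_iff.mp ha, ← zeq]
    exact sup_le h1 h2 (SetLike.mem_coe.mp hg)
end

section
/- Let K be a subgroup of a group G, let S be a K-set, let T be a G-set, and let f : S → T be a K-equivariant map. Let f̃ : G×_K S → T be the unique G-equivariant map satisfying f̃ ∘ ι = f (explicitly, f̃([(g,s)]) = g·f(s)). If the map of orbit spaces S/K → T/G induced by f is injective, and K_s = G_{f(s)} for every s ∈ S (where K_s is the K-stabilizer of s and G_{f(s)} the G-stabilizer of f(s)), then f̃ is injective. -/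
/-- The relation defining the induced `G`-set `G ×_K S`: `(g k, s) ~ (g, k • s)`.
Here `K` is a subgroup of `G` and `S` is a `K`-set. -/
def IndRel {G : Type*} [Group G] (K : Subgroup G) (S : Type*) [MulAction K S] :
    G × S → G × S → Prop :=
  fun p q => ∃ k : K, p.1 = q.1 * (k : G) ∧ q.2 = k • p.2

/-- The induced `G`-set `G ×_K S`: the quotient of `G × S` by `(g k, s) ~ (g, k • s)`. -/
def IndSet {G : Type*} [Group G] (K : Subgroup G) (S : Type*) [MulAction K S] : Type _ :=
  Quot (IndRel K S)

/-- The class of a pair `(g, s)` in `G ×_K S`. -/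
def IndSet.mk {G : Type*} [Group G] (K : Subgroup G) (S : Type*) [MulAction K S]
    (p : G × S) : IndSet K S :=
  Quot.mk _ p

instance {G : Type*} [Group G] (K : Subgroup G) (S : Type*) [MulAction K S] :
    SMul G (IndSet K S) :=
  ⟨fun g => Quot.map (fun p => (g * p.1, p.2)) (by
    rintro p q ⟨k, h1, h2⟩
    exact ⟨k, by dsimp only; rw [h1, mul_assoc], h2⟩)⟩

/-- `G` acts on `G ×_K S` by left multiplication on the first factor. -/
instance {G : Type*} [Group G] (K : Subgroup G) (S : Type*) [MulAction K S] :
    MulAction G (IndSet K S) where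
  one_smul := by
    rintro ⟨p⟩
    show IndSet.mk K S (1 * p.1, p.2) = IndSet.mk K S p
    rw [one_mul]
  mul_smul g h := by
    rintro ⟨p⟩
    show IndSet.mk K S (g * h * p.1, p.2) = IndSet.mk K S (g * (h * p.1), p.2)
    rw [mul_assoc]

/-- The canonical injective `K`-map `ι : S → G ×_K S`, `s ↦ [(1, s)]`. -/
def IndSet.incl {G : Type*} [Group G] (K : Subgroup G) (S : Type*) [MulAction K S]
    (s : S) : IndSet K S :=
  IndSet.mk K S (1, s)

/-- Let `K ≤ G`, let `S` be a `K`-set, `T` a `G`-set and `f : S → T` a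
`K`-equivariant map.  Let `f̃ : G ×_K S → T` be the unique `G`-map with `f̃ ∘ ι = f`,
i.e. `f̃ [(g, s)] = g • f s`.  If the induced map of orbit spaces `S/K → T/G` is injective
and `K_s = G_{f s}` for every `s ∈ S`, then `f̃` is injective. -/
theorem indSet_lift_injective
    {G : Type*} [Group G] (K : Subgroup G) (S T : Type*) [MulAction K S] [MulAction G T]
    (f : S → T) (hf : ∀ (k : K) (s : S), f (k • s) = (k : G) • f s)
    (ftilde : IndSet K S → T)
    (hft : ∀ (g : G) (s : S), ftilde (IndSet.mk K S (g, s)) = g • f s)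
    -- the induced map of orbit spaces `S/K → T/G` is injective:
    (horb : ∀ s s' : S, (∃ g : G, g • f s = f s') → ∃ k : K, k • s = s')
    -- `K_s = G_{f s}` for every `s ∈ S` (as subsets of `G`):
    (hstab : ∀ (s : S) (g : G), g • f s = f s ↔ ∃ k : K, (k : G) = g ∧ k • s = s) :
    Function.Injective ftilde := by
  rintro ⟨g, s⟩ ⟨g', s'⟩ h
  replace h : g • f s = g' • f s' := (hft g s).symm.trans (h.trans (hft g' s'))
  obtain ⟨k, hk⟩ := horb s s' ⟨g'⁻¹ * g, by rw [mul_smul, h, inv_smul_smul]⟩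
  have hfs' : f s' = (k : G) • f s := by rw [← hk, hf]
  have hfix : ((g' * (k : G))⁻¹ * g) • f s = f s := by
    rw [mul_smul, h, hfs', mul_inv_rev, mul_smul, inv_smul_smul, inv_smul_smul]
  obtain ⟨k₂, hk₂, hk₂s⟩ := (hstab s _).mp hfix
  have hg : g = g' * (k : G) * (k₂ : G) := by
    rw [hk₂]; group
  show IndSet.mk K S (g, s) = IndSet.mk K S (g', s')
  have h1 : IndSet.mk K S (g, s) = IndSet.mk K S (g' * (k : G), s) := by
    refine Quot.sound ⟨k₂, by simpa using hg, by simpa using hk₂s.symm⟩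
  have h2 : IndSet.mk K S (g' * (k : G), s) = IndSet.mk K S (g', s') := by
    exact Quot.sound ⟨k, rfl, hk.symm⟩
  rw [h1, h2]
end

section
/- Let G be a group, let K and L be subgroups of G, let C be a subgroup of K, and let φ : C → G be a monomorphism with φ(C) ≤ L. Let G∗_φ = ⟨G, t | tct⁻¹ = φ(c) for all c ∈ C⟩ be the HNN extension, with G regarded as a subgroup. Let P be the pushout (amalgamated product) of the inclusion C → K and the map C → L, c ↦ φ(c). Then the homomorphism P → G∗_φ determined by k ↦ tkt⁻¹ for k ∈ K and l ↦ l for l ∈ L is injective, and its image is the subgroup ⟨tKt⁻¹, L⟩ of G∗_φ; in particular ⟨K^t, L⟩ is isomorphic to the amalgamated product of K and L over C along these maps. -/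
open Monoid

/-! ### The amalgamated product of two groups -/

/-- The amalgamated product `G₁ ∗_C G₂` determined by `G₁ ←f₁− C −f₂→ G₂`: the quotient of
the free product `G₁ ∗ G₂` by the normal closure of the elements `f₁ c · (f₂ c)⁻¹`. -/
abbrev Amal {C G₁ G₂ : Type*} [Group C] [Group G₁] [Group G₂]
    (f₁ : C →* G₁) (f₂ : C →* G₂) : Type _ :=
  Coprod G₁ G₂ ⧸ Subgroup.normalClosure
    {x : Coprod G₁ G₂ | ∃ c : C, x = Coprod.inl (f₁ c) * (Coprod.inr (f₂ c))⁻¹}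

/-- The canonical homomorphism `G₁ →* G₁ ∗_C G₂`. -/
def Amal.inl {C G₁ G₂ : Type*} [Group C] [Group G₁] [Group G₂]
    (f₁ : C →* G₁) (f₂ : C →* G₂) : G₁ →* Amal f₁ f₂ :=
  (QuotientGroup.mk' _).comp Coprod.inl

/-- The canonical homomorphism `G₂ →* G₁ ∗_C G₂`. -/
def Amal.inr {C G₁ G₂ : Type*} [Group C] [Group G₁] [Group G₂]
    (f₁ : C →* G₁) (f₂ : C →* G₂) : G₂ →* Amal f₁ f₂ :=
  (QuotientGroup.mk' _).comp Coprod.inr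

/-!
Every element of `K ∗_C L` can be written as `l₀ (k₁ l₁) ⋯ (kₙ lₙ)` with `kᵢ ∉ C` and
`lᵢ ∉ φ(C)` for `i < n`. Its image in `G∗_φ` is `l₀ t k₁ t⁻¹ l₁ ⋯ t kₙ t⁻¹ lₙ`, which is a reduced
word of the HNN extension, so by Britton's lemma it lies in `G` only if `n = 0`; then it is
trivial only if `l₀ = 1`.
-/

namespace Amal

variable {C G₁ G₂ : Type*} [Group C] [Group G₁] [Group G₂] (f₁ : C →* G₁) (f₂ : C →* G₂)

theorem inl_apply_eq_inr_apply (c : C) : inl f₁ f₂ (f₁ c) = inr f₁ f₂ (f₂ c) :=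
  QuotientGroup.eq_iff_div_mem.2 <| Subgroup.subset_normalClosure ⟨c, div_eq_mul_inv _ _⟩

def wordProd (ws : List (G₁ × G₂)) : Amal f₁ f₂ :=
  (ws.map fun p => inl f₁ f₂ p.1 * inr f₁ f₂ p.2).prod

@[simp]
theorem wordProd_nil : wordProd f₁ f₂ [] = 1 := rfl

@[simp]
theorem wordProd_cons (p : G₁ × G₂) (ws : List (G₁ × G₂)) :
    wordProd f₁ f₂ (p :: ws) = inl f₁ f₂ p.1 * inr f₁ f₂ p.2 * wordProd f₁ f₂ ws := rfl

section Lift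

variable {M : Type*} [Group M] (g₁ : G₁ →* M) (g₂ : G₂ →* M) (h : ∀ c, g₁ (f₁ c) = g₂ (f₂ c))

def lift : Amal f₁ f₂ →* M :=
  QuotientGroup.lift _ (Coprod.lift g₁ g₂) <| Subgroup.normalClosure_le_normal <| by
    rintro _ ⟨c, rfl⟩
    simp [h]

@[simp]
theorem lift_inl (g : G₁) : lift f₁ f₂ g₁ g₂ h (inl f₁ f₂ g) = g₁ g := rfl

@[simp]
theorem lift_inr (g : G₂) : lift f₁ f₂ g₁ g₂ h (inr f₁ f₂ g) = g₂ g := rfl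

theorem range_lift : (lift f₁ f₂ g₁ g₂ h).range = g₁.range ⊔ g₂.range := by
  calc (lift f₁ f₂ g₁ g₂ h).range = ((lift f₁ f₂ g₁ g₂ h).comp (QuotientGroup.mk' _)).range := by
        rw [MonoidHom.range_comp,
          MonoidHom.range_eq_top_of_surjective _ (QuotientGroup.mk'_surjective _),
          ← MonoidHom.range_eq_map]
    _ = g₁.range ⊔ g₂.range := Coprod.range_lift g₁ g₂

theorem lift_wordProd (ws : List (G₁ × G₂)) :
    lift f₁ f₂ g₁ g₂ h (wordProd f₁ f₂ ws) = (ws.map fun p => g₁ p.1 * g₂ p.2).prod := by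
  induction ws with
  | nil => simp
  | cons p ws ih => simp [ih]

end Lift

def IsReduced (ws : List (G₁ × G₂)) : Prop :=
  (∀ p ∈ ws, p.1 ∉ f₁.range) ∧ ws.IsChain fun p _ => p.2 ∉ f₂.range

theorem inl_apply_mul_inr (c : C) (l : G₂) (x : Amal f₁ f₂) :
    inl f₁ f₂ (f₁ c) * (inr f₁ f₂ l * x) = inr f₁ f₂ (f₂ c * l) * x := by
  rw [inl_apply_eq_inr_apply, map_mul, mul_assoc]

theorem exists_reduced_inl_mul (k : G₁) (l : G₂) {ws : List (G₁ × G₂)}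
    (hws : IsReduced f₁ f₂ ws) :
    ∃ l' ws', IsReduced f₁ f₂ ws' ∧
      inl f₁ f₂ k * (inr f₁ f₂ l * wordProd f₁ f₂ ws) = inr f₁ f₂ l' * wordProd f₁ f₂ ws' := by
  induction ws generalizing k l with
  | nil =>
    by_cases hk : k ∈ f₁.range
    · obtain ⟨c, rfl⟩ := hk
      exact ⟨_, [], hws, inl_apply_mul_inr f₁ f₂ c l _⟩
    exact ⟨1, [(k, l)], ⟨by simpa using hk, .singleton _⟩, by simp⟩
  | cons p ws ih =>
    by_cases hk : k ∈ f₁.range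
    · obtain ⟨c, rfl⟩ := hk
      exact ⟨_, _, hws, inl_apply_mul_inr f₁ f₂ c l _⟩
    by_cases hl : l ∈ f₂.range
    · obtain ⟨c, rfl⟩ := hl
      have hcollapse : inl f₁ f₂ k * (inr f₁ f₂ (f₂ c) * wordProd f₁ f₂ (p :: ws)) =
          inl f₁ f₂ (k * f₁ c * p.1) * (inr f₁ f₂ p.2 * wordProd f₁ f₂ ws) := by
        simp only [wordProd_cons, ← inl_apply_eq_inr_apply, map_mul, mul_assoc]
      rw [hcollapse]
      exact ih _ _ ⟨fun q hq => hws.1 q (List.mem_cons_of_mem _ hq), hws.2.tail⟩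
    · refine ⟨1, (k, l) :: p :: ws, ⟨?_, ?_⟩, by simp [mul_assoc]⟩
      · exact List.forall_mem_cons.2 ⟨hk, hws.1⟩
      · exact List.isChain_cons_cons.2 ⟨hl, hws.2⟩

theorem exists_reduced (x : Amal f₁ f₂) :
    ∃ l ws, IsReduced f₁ f₂ ws ∧ x = inr f₁ f₂ l * wordProd f₁ f₂ ws := by
  obtain ⟨w, rfl⟩ := QuotientGroup.mk_surjective x
  suffices h : ∀ l ws, IsReduced f₁ f₂ ws → ∃ l' ws', IsReduced f₁ f₂ ws' ∧
      (w : Amal f₁ f₂) * (inr f₁ f₂ l * wordProd f₁ f₂ ws) = inr f₁ f₂ l' * wordProd f₁ f₂ ws' by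
    simpa using h 1 [] ⟨by simp, .nil⟩
  induction w using Coprod.induction_on with
  | inl k => exact fun l ws hws => exists_reduced_inl_mul f₁ f₂ k l hws
  | inr g => exact fun l ws hws => ⟨g * l, ws, hws, by rw [map_mul, mul_assoc]; rfl⟩
  | mul v w hv hw =>
    intro l ws hws
    obtain ⟨l₁, ws₁, hws₁, h₁⟩ := hw l ws hws
    obtain ⟨l₂, ws₂, hws₂, h₂⟩ := hv l₁ ws₁ hws₁
    exact ⟨l₂, ws₂, hws₂, by rw [QuotientGroup.mk_mul, mul_assoc, h₁, h₂]⟩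

end Amal

namespace HNNExtension

variable {G : Type*} [Group G] {A B : Subgroup G} (ψ : A ≃* B)

theorem isChain_flatMap_t_inv_t {ws : List (G × G)} (h₁ : ∀ p ∈ ws, p.1 ∉ A)
    (h₂ : ws.IsChain fun p _ => p.2 ∉ B) :
    (ws.flatMap fun p => [((1 : ℤˣ), p.1), (-1, p.2)]).IsChain
      fun a b => a.2 ∈ toSubgroup A B a.1 → a.1 = b.1 := by
  induction ws with
  | nil => exact .nil
  | cons p ws ih =>
    have ih := ih (fun q hq => h₁ q (List.mem_cons_of_mem _ hq)) h₂.tail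
    refine List.isChain_cons_cons.2 ⟨fun h => absurd h (h₁ p List.mem_cons_self), ?_⟩
    cases ws with
    | nil => exact .singleton _
    | cons q ws =>
      exact List.isChain_cons_cons.2 ⟨fun h => absurd h (List.isChain_cons_cons.1 h₂).1, ih⟩

/-- Britton's lemma for words `t g₁ t⁻¹ g₁' ⋯ t gₙ t⁻¹ gₙ'` -/
theorem eq_nil_of_mem_range_of {g : G} {ws : List (G × G)} (h₁ : ∀ p ∈ ws, p.1 ∉ A)
    (h₂ : ws.IsChain fun p _ => p.2 ∉ B)
    (h : of g * (ws.map fun p => t * of p.1 * t⁻¹ * of p.2).prod ∈ (of (φ := ψ)).range) :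
    ws = [] := by
  let w : NormalWord.ReducedWord G A B := ⟨g, _, isChain_flatMap_t_inv_t h₁ h₂⟩
  have hprod : w.prod ψ = of g * (ws.map fun p => t * of p.1 * t⁻¹ * of p.2).prod := by
    simp only [w, NormalWord.ReducedWord.prod, List.flatMap, List.map_flatten, List.prod_flatten,
      List.map_map]
    congr 2
  have hnil := ReducedWord.toList_eq_nil_of_mem_of_range ψ w (hprod ▸ h)
  cases ws with
  | nil => rfl
  | cons p ws => simp [w] at hnil

section OfAmal

variable {K L : Subgroup G}
  (r₁ : A →* K) (hr₁ : ∀ a, (r₁ a : G) = a) (r₂ : A →* L) (hr₂ : ∀ a, (r₂ a : G) = ψ a)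

def ofAmal : Amal r₁ r₂ →* HNNExtension G A B ψ :=
  Amal.lift r₁ r₂ ((MulAut.conj t).toMonoidHom.comp (of.comp K.subtype)) (of.comp L.subtype)
    fun a => by simp [hr₁, hr₂, equiv_eq_conj]

theorem ofAmal_inl (k : K) :
    ofAmal ψ r₁ hr₁ r₂ hr₂ (Amal.inl r₁ r₂ k) = t * of (k : G) * t⁻¹ := by
  simp [ofAmal]

theorem ofAmal_inr (l : L) : ofAmal ψ r₁ hr₁ r₂ hr₂ (Amal.inr r₁ r₂ l) = of (l : G) := by
  simp [ofAmal]

theorem range_ofAmal : (ofAmal ψ r₁ hr₁ r₂ hr₂).range =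
    (K.map of).map (MulAut.conj t).toMonoidHom ⊔ L.map of := by
  simp [ofAmal, Amal.range_lift, MonoidHom.range_comp]

theorem ofAmal_injective : Function.Injective (ofAmal ψ r₁ hr₁ r₂ hr₂) := by
  rw [injective_iff_map_eq_one]
  intro x hx
  obtain ⟨l, ws, ⟨hws₁, hws₂⟩, rfl⟩ := Amal.exists_reduced r₁ r₂ x
  set vs := ws.map fun p => ((p.1 : G), (p.2 : G))
  have hprod : ofAmal ψ r₁ hr₁ r₂ hr₂ (Amal.inr r₁ r₂ l * Amal.wordProd r₁ r₂ ws) =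
      of (l : G) * (vs.map fun p => t * of p.1 * t⁻¹ * of p.2).prod := by
    simp [vs, ofAmal, Amal.lift_wordProd, Function.comp_def, MulAut.conj_apply, mul_assoc]
  have hvs₁ : ∀ p ∈ vs, p.1 ∉ A :=
    List.forall_mem_map.2 fun p hp hA => hws₁ p hp ⟨⟨_, hA⟩, Subtype.ext (hr₁ _)⟩
  have hvs₂ : vs.IsChain fun p _ => p.2 ∉ B :=
    (List.isChain_map _).2 <| hws₂.imp fun p _ hp hB =>
      hp ⟨ψ.symm ⟨_, hB⟩, Subtype.ext (by simp [hr₂])⟩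
  obtain rfl : ws = [] := List.map_eq_nil_iff.1 <|
    eq_nil_of_mem_range_of ψ hvs₁ hvs₂ (by rw [← hprod, hx]; exact one_mem _)
  rw [Amal.wordProd_nil, mul_one, ofAmal_inr] at hx
  rw [Amal.wordProd_nil, mul_one,
    OneMemClass.coe_eq_one.1 <| (map_eq_one_iff _ (of_injective ψ)).1 hx, map_one]

end OfAmal

end HNNExtension

theorem hnn_conjugate_amalgam_general
    {G : Type*} [Group G] (K L C : Subgroup G)
    (φ : ↥C →* G) (hφ : Function.Injective φ)
    -- `r₁` is the inclusion `C → K` and `r₂` is `φ` viewed as a map `C → L`: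
    (r₁ : ↥C →* ↥K) (hr₁ : ∀ c : ↥C, (r₁ c : G) = (c : G))
    (r₂ : ↥C →* ↥L) (hr₂ : ∀ c : ↥C, (r₂ c : G) = φ c) :
    ∃ F : Amal r₁ r₂ →* HNNExtension G C φ.range (MonoidHom.ofInjective hφ),
      (∀ k : ↥K, F (Amal.inl r₁ r₂ k) =
        HNNExtension.t * HNNExtension.of (k : G) * HNNExtension.t⁻¹) ∧
      (∀ l : ↥L, F (Amal.inr r₁ r₂ l) = HNNExtension.of (l : G)) ∧
      Function.Injective F ∧
      F.range =
        (K.map (HNNExtension.of :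
            G →* HNNExtension G C φ.range (MonoidHom.ofInjective hφ))).map
          (MulAut.conj (HNNExtension.t)).toMonoidHom ⊔
        L.map (HNNExtension.of :
            G →* HNNExtension G C φ.range (MonoidHom.ofInjective hφ)) ∧
      Nonempty (Amal r₁ r₂ ≃*
        ↥((K.map (HNNExtension.of :
              G →* HNNExtension G C φ.range (MonoidHom.ofInjective hφ))).map
            (MulAut.conj (HNNExtension.t)).toMonoidHom ⊔
          L.map (HNNExtension.of :
              G →* HNNExtension G C φ.range (MonoidHom.ofInjective hφ)))) := by
  have hinj := HNNExtension.ofAmal_injective (MonoidHom.ofInjective hφ) r₁ hr₁ r₂ hr₂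
  have hrange := HNNExtension.range_ofAmal (MonoidHom.ofInjective hφ) r₁ hr₁ r₂ hr₂
  exact ⟨_, HNNExtension.ofAmal_inl _ r₁ hr₁ r₂ hr₂, HNNExtension.ofAmal_inr _ r₁ hr₁ r₂ hr₂,
    hinj, hrange, ⟨(MonoidHom.ofInjective hinj).trans (MulEquiv.subgroupCongr hrange)⟩⟩

/-- Let `K, L ≤ G`, `C ≤ K`, and let `φ : C → G` be a monomorphism with
`φ(C) ≤ L`.  Let `G∗_φ = ⟨G, t ∣ t c t⁻¹ = φ(c)⟩` be the HNN extension, and let `P` be the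
amalgamated product `K ∗_C L` of the inclusion `C → K` and `c ↦ φ(c) : C → L`.  Then the
homomorphism `P → G∗_φ` determined by `k ↦ t k t⁻¹` and `l ↦ l` is injective with image
`⟨t K t⁻¹, L⟩`; in particular `⟨K^t, L⟩` is isomorphic to `K ∗_C L`. -/
theorem hnn_conjugate_amalgam
    {G : Type*} [Group G] (K L C : Subgroup G) (hCK : C ≤ K)
    (φ : ↥C →* G) (hφ : Function.Injective φ) (hφL : φ.range ≤ L)
    -- `r₁` is the inclusion `C → K` and `r₂` is `φ` viewed as a map `C → L`:
    (r₁ : ↥C →* ↥K) (hr₁ : ∀ c : ↥C, (r₁ c : G) = (c : G))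
    (r₂ : ↥C →* ↥L) (hr₂ : ∀ c : ↥C, (r₂ c : G) = φ c) :
    ∃ F : Amal r₁ r₂ →* HNNExtension G C φ.range (MonoidHom.ofInjective hφ),
      (∀ k : ↥K, F (Amal.inl r₁ r₂ k) =
        HNNExtension.t * HNNExtension.of (k : G) * HNNExtension.t⁻¹) ∧
      (∀ l : ↥L, F (Amal.inr r₁ r₂ l) = HNNExtension.of (l : G)) ∧
      Function.Injective F ∧
      F.range =
        (K.map (HNNExtension.of :
            G →* HNNExtension G C φ.range (MonoidHom.ofInjective hφ))).map
          (MulAut.conj (HNNExtension.t)).toMonoidHom ⊔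
        L.map (HNNExtension.of :
            G →* HNNExtension G C φ.range (MonoidHom.ofInjective hφ)) ∧
      Nonempty (Amal r₁ r₂ ≃*
        ↥((K.map (HNNExtension.of :
              G →* HNNExtension G C φ.range (MonoidHom.ofInjective hφ))).map
            (MulAut.conj (HNNExtension.t)).toMonoidHom ⊔
          L.map (HNNExtension.of :
              G →* HNNExtension G C φ.range (MonoidHom.ofInjective hφ)))) :=
  hnn_conjugate_amalgam_general K L C φ hφ r₁ hr₁ r₂ hr₂
end

section
/- Let G = A ∗_C B be an amalgamated product of groups A and B over monomorphisms ∂₁ : C → A and ∂₂ : C → B. Let X be an A-graph, Y a B-graph, x a vertex of X fixed by ∂₁(C), and y a vertex of Y fixed by ∂₂(C). Let Z be the C-pushout of G×_A X and G×_B Y with respect to (the images of) x and y. If X and Y are connected graphs, then Z is a connected graph. -/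
open Monoid

/-! ### The induced `G`-set `G ×_A S` along a homomorphism `A →* G` -/

/-- The relation defining `G ×_A S` along `ι : A →* G`: `(g · ι a, s) ~ (g, a • s)`. -/
def IndRelH {A G : Type*} [Group A] [Group G] (ι : A →* G) (S : Type*) [MulAction A S] :
    G × S → G × S → Prop :=
  fun p q => ∃ a : A, p.1 = q.1 * ι a ∧ q.2 = a • p.2

/-- The induced `G`-set `G ×_A S` along `ι : A →* G`. -/
def IndSetH {A G : Type*} [Group A] [Group G] (ι : A →* G) (S : Type*) [MulAction A S] :
    Type _ :=
  Quot (IndRelH ι S)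

/-- The class of a pair `(g, s)` in `G ×_A S`. -/
def IndSetH.mk {A G : Type*} [Group A] [Group G] (ι : A →* G) (S : Type*) [MulAction A S]
    (p : G × S) : IndSetH ι S :=
  Quot.mk _ p

instance {A G : Type*} [Group A] [Group G] (ι : A →* G) (S : Type*) [MulAction A S] :
    SMul G (IndSetH ι S) :=
  ⟨fun g => Quot.map (fun p => (g * p.1, p.2)) (by
    rintro p q ⟨a, h1, h2⟩
    exact ⟨a, by dsimp only; rw [h1, mul_assoc], h2⟩)⟩

/-- `G` acts on `G ×_A S` by left multiplication on the first factor. -/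
instance {A G : Type*} [Group A] [Group G] (ι : A →* G) (S : Type*) [MulAction A S] :
    MulAction G (IndSetH ι S) where
  one_smul := by
    rintro ⟨p⟩
    show IndSetH.mk ι S (1 * p.1, p.2) = IndSetH.mk ι S p
    rw [one_mul]
  mul_smul g h := by
    rintro ⟨p⟩
    show IndSetH.mk ι S (g * h * p.1, p.2) = IndSetH.mk ι S (g * (h * p.1), p.2)
    rw [mul_assoc]

/-! ### The `C`-pushout of the induced graphs `G ×_A X` and `G ×_B Y` -/

section GraphPushout

variable {C G₁ G₂ : Type*} [Group C] [Group G₁] [Group G₂]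
  (f₁ : C →* G₁) (f₂ : C →* G₂)
  {VX VY : Type*} [MulAction G₁ VX] [MulAction G₂ VY]

/-- The identifications defining the `C`-pushout of `G ×_{G₁} X` and `G ×_{G₂} Y` with
respect to `(x, y)`: for every `g ∈ G`, the vertex `g • x` is glued to `g • y`. -/
def AmalPRel (x : VX) (y : VY) :
    (IndSetH (Amal.inl f₁ f₂) VX ⊕ IndSetH (Amal.inr f₁ f₂) VY) →
    (IndSetH (Amal.inl f₁ f₂) VX ⊕ IndSetH (Amal.inr f₁ f₂) VY) → Prop :=
  fun u v => ∃ g : Amal f₁ f₂,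
    u = Sum.inl (IndSetH.mk (Amal.inl f₁ f₂) VX (g, x)) ∧
    v = Sum.inr (IndSetH.mk (Amal.inr f₁ f₂) VY (g, y))

/-- The vertex set of the `C`-pushout of `G ×_{G₁} X` and `G ×_{G₂} Y` w.r.t. `(x, y)`. -/
def PushV (x : VX) (y : VY) : Type _ :=
  Quot (AmalPRel f₁ f₂ x y)

/-- The quotient map onto the vertex set of the `C`-pushout. -/
def PushV.mk (x : VX) (y : VY)
    (u : IndSetH (Amal.inl f₁ f₂) VX ⊕ IndSetH (Amal.inr f₁ f₂) VY) : PushV f₁ f₂ x y :=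
  Quot.mk _ u

instance (x : VX) (y : VY) : SMul (Amal f₁ f₂) (PushV f₁ f₂ x y) :=
  ⟨fun g => Quot.map (fun u => g • u) (by
    rintro u v ⟨h, rfl, rfl⟩
    exact ⟨g * h, rfl, rfl⟩)⟩

/-- The group `G = G₁ ∗_C G₂` acts on the `C`-pushout. -/
instance (x : VX) (y : VY) : MulAction (Amal f₁ f₂) (PushV f₁ f₂ x y) where
  one_smul := by
    rintro ⟨u⟩
    show PushV.mk f₁ f₂ x y ((1 : Amal f₁ f₂) • u) = PushV.mk f₁ f₂ x y u
    rw [one_smul]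
  mul_smul g h := by
    rintro ⟨u⟩
    show PushV.mk f₁ f₂ x y ((g * h) • u) = PushV.mk f₁ f₂ x y (g • h • u)
    rw [mul_smul]

/-- The canonical map `X → Z` (composition `X ↪ G ×_{G₁} X → Z`). -/
def PushV.inX (x : VX) (y : VY) (v : VX) : PushV f₁ f₂ x y :=
  PushV.mk f₁ f₂ x y (Sum.inl (IndSetH.mk (Amal.inl f₁ f₂) VX (1, v)))

/-- The canonical map `Y → Z` (composition `Y ↪ G ×_{G₂} Y → Z`). -/
def PushV.inY (x : VX) (y : VY) (w : VY) : PushV f₁ f₂ x y :=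
  PushV.mk f₁ f₂ x y (Sum.inr (IndSetH.mk (Amal.inr f₁ f₂) VY (1, w)))

/-- The common image `z` of the vertices `x` and `y` in the `C`-pushout. -/
def PushV.basePt (x : VX) (y : VY) : PushV f₁ f₂ x y :=
  PushV.inX f₁ f₂ x y x

/-- The adjacency relation of the `C`-pushout of the graphs `G ×_{G₁} X` and
`G ×_{G₂} Y`: edges are the edges coming from the copies of `X` and of `Y`. -/
def PushAdj (X : SimpleGraph VX) (Y : SimpleGraph VY) (x : VX) (y : VY) :
    PushV f₁ f₂ x y → PushV f₁ f₂ x y → Prop :=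
  fun u v =>
    (∃ (g : Amal f₁ f₂) (a b : VX), X.Adj a b ∧
      u = PushV.mk f₁ f₂ x y (Sum.inl (IndSetH.mk (Amal.inl f₁ f₂) VX (g, a))) ∧
      v = PushV.mk f₁ f₂ x y (Sum.inl (IndSetH.mk (Amal.inl f₁ f₂) VX (g, b)))) ∨
    (∃ (g : Amal f₁ f₂) (a b : VY), Y.Adj a b ∧
      u = PushV.mk f₁ f₂ x y (Sum.inr (IndSetH.mk (Amal.inr f₁ f₂) VY (g, a))) ∧
      v = PushV.mk f₁ f₂ x y (Sum.inr (IndSetH.mk (Amal.inr f₁ f₂) VY (g, b))))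

/-- The `C`-pushout `Z` of the `G`-graphs `G ×_{G₁} X` and `G ×_{G₂} Y` w.r.t. `(x, y)`. -/
def PushGraph (X : SimpleGraph VX) (Y : SimpleGraph VY) (x : VX) (y : VY) :
    SimpleGraph (PushV f₁ f₂ x y) :=
  SimpleGraph.fromRel (PushAdj f₁ f₂ X Y x y)

end GraphPushout

section Aux

variable {C G₁ G₂ : Type*} [Group C] [Group G₁] [Group G₂]
  (f₁ : C →* G₁) (f₂ : C →* G₂)
  {VX VY : Type*} [MulAction G₁ VX] [MulAction G₂ VY]
  (X : SimpleGraph VX) (Y : SimpleGraph VY) (x : VX) (y : VY)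

/-- The vertex of `Z` coming from `(g, a)` on the `X` side. -/
def mkl (g : Amal f₁ f₂) (a : VX) : PushV f₁ f₂ x y :=
  PushV.mk f₁ f₂ x y (Sum.inl (IndSetH.mk (Amal.inl f₁ f₂) VX (g, a)))

/-- The vertex of `Z` coming from `(g, b)` on the `Y` side. -/
def mkr (g : Amal f₁ f₂) (b : VY) : PushV f₁ f₂ x y :=
  PushV.mk f₁ f₂ x y (Sum.inr (IndSetH.mk (Amal.inr f₁ f₂) VY (g, b)))

theorem glue (g : Amal f₁ f₂) : mkl f₁ f₂ x y g x = mkr f₁ f₂ x y g y :=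
  Quot.sound ⟨g, rfl, rfl⟩

theorem shiftX (g : Amal f₁ f₂) (a : G₁) (v : VX) :
    mkl f₁ f₂ x y (g * Amal.inl f₁ f₂ a) v = mkl f₁ f₂ x y g (a • v) :=
  congrArg (fun u => PushV.mk f₁ f₂ x y (Sum.inl u)) (Quot.sound ⟨a, rfl, rfl⟩)

theorem shiftY (g : Amal f₁ f₂) (b : G₂) (w : VY) :
    mkr f₁ f₂ x y (g * Amal.inr f₁ f₂ b) w = mkr f₁ f₂ x y g (b • w) :=
  congrArg (fun u => PushV.mk f₁ f₂ x y (Sum.inr u)) (Quot.sound ⟨b, rfl, rfl⟩)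

theorem reachX (g : Amal f₁ f₂) {a b : VX} (h : X.Reachable a b) :
    (PushGraph f₁ f₂ X Y x y).Reachable (mkl f₁ f₂ x y g a) (mkl f₁ f₂ x y g b) := by
  obtain ⟨w⟩ := h
  induction w with
  | nil => exact SimpleGraph.Reachable.refl _
  | @cons p q r hadj _ ih =>
    refine SimpleGraph.Reachable.trans ?_ ih
    by_cases he : mkl f₁ f₂ x y g p = mkl f₁ f₂ x y g q
    · exact he ▸ SimpleGraph.Reachable.refl _
    · exact SimpleGraph.Adj.reachable ⟨he, Or.inl (Or.inl ⟨g, p, q, hadj, rfl, rfl⟩)⟩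

theorem reachY (g : Amal f₁ f₂) {a b : VY} (h : Y.Reachable a b) :
    (PushGraph f₁ f₂ X Y x y).Reachable (mkr f₁ f₂ x y g a) (mkr f₁ f₂ x y g b) := by
  obtain ⟨w⟩ := h
  induction w with
  | nil => exact SimpleGraph.Reachable.refl _
  | @cons p q r hadj _ ih =>
    refine SimpleGraph.Reachable.trans ?_ ih
    by_cases he : mkr f₁ f₂ x y g p = mkr f₁ f₂ x y g q
    · exact he ▸ SimpleGraph.Reachable.refl _
    · exact SimpleGraph.Adj.reachable ⟨he, Or.inl (Or.inr ⟨g, p, q, hadj, rfl, rfl⟩)⟩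

end Aux

/-- If `X` and `Y` are connected graphs, then the `C`-pushout `Z` of
`G ×_A X` and `G ×_B Y` with respect to `(x, y)` is a connected graph. -/
theorem pushout_connected
    {C G₁ G₂ : Type*} [Group C] [Group G₁] [Group G₂]
    (f₁ : C →* G₁) (f₂ : C →* G₂)
    (hf₁ : Function.Injective f₁) (hf₂ : Function.Injective f₂)
    {VX VY : Type*} [MulAction G₁ VX] [MulAction G₂ VY]
    (X : SimpleGraph VX) (Y : SimpleGraph VY)
    (hX : ∀ (g : G₁) (a b : VX), X.Adj a b → X.Adj (g • a) (g • b))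
    (hY : ∀ (g : G₂) (a b : VY), Y.Adj a b → Y.Adj (g • a) (g • b))
    (x : VX) (y : VY)
    (hx : ∀ c : C, f₁ c • x = x) (hy : ∀ c : C, f₂ c • y = y) :
    X.Connected → Y.Connected → (PushGraph f₁ f₂ X Y x y).Connected := by
  intro hXc hYc
  have stepX : ∀ (h : Amal f₁ f₂) (a : G₁),
      (PushGraph f₁ f₂ X Y x y).Reachable (PushV.basePt f₁ f₂ x y) (mkl f₁ f₂ x y h x) →
      (PushGraph f₁ f₂ X Y x y).Reachable (PushV.basePt f₁ f₂ x y)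
        (mkl f₁ f₂ x y (h * Amal.inl f₁ f₂ a) x) := by
    intro h a hh
    rw [shiftX f₁ f₂ x y h a x]
    exact hh.trans (reachX f₁ f₂ X Y x y h (hXc.preconnected x (a • x)))
  have stepY : ∀ (h : Amal f₁ f₂) (b : G₂),
      (PushGraph f₁ f₂ X Y x y).Reachable (PushV.basePt f₁ f₂ x y) (mkl f₁ f₂ x y h x) →
      (PushGraph f₁ f₂ X Y x y).Reachable (PushV.basePt f₁ f₂ x y)
        (mkl f₁ f₂ x y (h * Amal.inr f₁ f₂ b) x) := by
    intro h b hh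
    rw [glue f₁ f₂ x y, shiftY f₁ f₂ x y h b y]
    have hh' : (PushGraph f₁ f₂ X Y x y).Reachable (PushV.basePt f₁ f₂ x y)
        (mkr f₁ f₂ x y h y) := by
      rw [← glue f₁ f₂ x y]; exact hh
    exact hh'.trans (reachY f₁ f₂ X Y x y h (hYc.preconnected y (b • y)))
  have key : ∀ g : Amal f₁ f₂,
      (PushGraph f₁ f₂ X Y x y).Reachable (PushV.basePt f₁ f₂ x y) (mkl f₁ f₂ x y g x) := by
    intro g
    obtain ⟨w, rfl⟩ := QuotientGroup.mk_surjective g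
    have main : ∀ w : Coprod G₁ G₂, ∀ h : Amal f₁ f₂,
        (PushGraph f₁ f₂ X Y x y).Reachable (PushV.basePt f₁ f₂ x y) (mkl f₁ f₂ x y h x) →
        (PushGraph f₁ f₂ X Y x y).Reachable (PushV.basePt f₁ f₂ x y)
          (mkl f₁ f₂ x y (h * (QuotientGroup.mk' _ w)) x) := by
      intro w
      induction w using Coprod.induction_on with
      | inl a => intro h hh; exact stepX h a hh
      | inr b => intro h hh; exact stepY h b hh
      | mul w₁ w₂ ih₁ ih₂ =>
        intro h hh
        rw [map_mul, ← mul_assoc]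
        exact ih₂ _ (ih₁ _ hh)
    have := main w 1 (SimpleGraph.Reachable.refl _)
    simpa using this
  have hbp : ∀ v : PushV f₁ f₂ x y,
      (PushGraph f₁ f₂ X Y x y).Reachable (PushV.basePt f₁ f₂ x y) v := by
    intro v
    obtain ⟨s, rfl⟩ := Quot.exists_rep v
    cases s with
    | inl u =>
      obtain ⟨⟨g, a⟩, rfl⟩ := Quot.exists_rep u
      exact (key g).trans (reachX f₁ f₂ X Y x y g (hXc.preconnected x a))
    | inr u =>
      obtain ⟨⟨g, b⟩, rfl⟩ := Quot.exists_rep u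
      refine (key g).trans ?_
      rw [glue f₁ f₂ x y g]
      exact reachY f₁ f₂ X Y x y g (hYc.preconnected y b)
  have : Nonempty (PushV f₁ f₂ x y) := ⟨PushV.basePt f₁ f₂ x y⟩
  exact SimpleGraph.Connected.mk (fun u v => (hbp u).symm.trans (hbp v))
end

section
/- Let H be a subgroup of a group A, let φ : H → A be a group monomorphism, and let G = A∗_φ be the HNN extension with stable letter t, with A regarded as a subgroup of G. Let X be an A-set, and let x, y ∈ X be points in different A-orbits such that the A-stabilizer of x is H and the A-stabilizer of y is φ(H). Let Z be the φ-coalescence of X with respect to (x,y), with quotient G-map ρ : G×_A X → Z, and set z = ρ(ι(y)). Then: (1) the G-stabilizer G_z equals φ(H); and (2) the A-equivariant map ȷ : X → Z given by the composition of ι : X → G×_A X with ρ is injective. -/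
/-! ### The HNN extension `A∗_φ` of `A` along a monomorphism `φ : H → A` -/

section HNN

variable {A : Type*} [Group A] (H : Subgroup A) (φ : ↥H →* A) (hφ : Function.Injective φ)

/-- The HNN extension `A∗_φ = ⟨A, t ∣ t h t⁻¹ = φ(h) for h ∈ H⟩` of `A` along the
monomorphism `φ : H → A`. -/
noncomputable abbrev HNNGroup : Type _ :=
  HNNExtension A H φ.range (MonoidHom.ofInjective hφ)

/-! ### The `φ`-coalescence -/

variable (X : Type*) [MulAction A X]

/-- The identifications defining the `φ`-coalescence of `X` with respect to `(x, y)`: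
for every `g ∈ G = A∗_φ`, the point `g t • ι x` is glued to `g • ι y` in `G ×_A X`. -/
def CoalRel (x y : X) :
    IndSetH (HNNExtension.of : A →* HNNGroup H φ hφ) X →
    IndSetH (HNNExtension.of : A →* HNNGroup H φ hφ) X → Prop :=
  fun u v => ∃ g : HNNGroup H φ hφ,
    u = IndSetH.mk _ X (g * HNNExtension.t, x) ∧ v = IndSetH.mk _ X (g, y)

/-- The `φ`-coalescence of the `A`-set `X` with respect to `(x, y)`: the quotient of the
induced `G`-set `G ×_A X` by the relation generated by `g t • ι x ~ g • ι y`. -/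
def CoalSet (x y : X) : Type _ :=
  Quot (CoalRel H φ hφ X x y)

/-- The quotient `G`-map `ρ : G ×_A X → Z`. -/
def CoalSet.rho (x y : X)
    (u : IndSetH (HNNExtension.of : A →* HNNGroup H φ hφ) X) : CoalSet H φ hφ X x y :=
  Quot.mk _ u

noncomputable instance (x y : X) : SMul (HNNGroup H φ hφ) (CoalSet H φ hφ X x y) :=
  ⟨fun g => Quot.map (fun u => g • u) (by
    rintro u v ⟨h, rfl, rfl⟩
    refine ⟨g * h, ?_, rfl⟩
    show IndSetH.mk _ X (g * (h * HNNExtension.t), x) =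
      IndSetH.mk _ X (g * h * HNNExtension.t, x)
    rw [mul_assoc])⟩

/-- The group `G = A∗_φ` acts on the `φ`-coalescence. -/
noncomputable instance (x y : X) : MulAction (HNNGroup H φ hφ) (CoalSet H φ hφ X x y) where
  one_smul := by
    rintro ⟨u⟩
    show CoalSet.rho H φ hφ X x y ((1 : HNNGroup H φ hφ) • u) = CoalSet.rho H φ hφ X x y u
    rw [one_smul]
  mul_smul g h := by
    rintro ⟨u⟩
    show CoalSet.rho H φ hφ X x y ((g * h) • u) = CoalSet.rho H φ hφ X x y (g • h • u)
    rw [mul_smul]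

/-- The canonical `A`-map `ȷ : X → Z`, the composition of `ι : X → G ×_A X` with `ρ`. -/
noncomputable def CoalSet.incl (x y : X) (s : X) : CoalSet H φ hφ X x y :=
  CoalSet.rho H φ hφ X x y (IndSetH.mk _ X (1, s))

/-- The distinguished point `z = ρ (ι y)` of the `φ`-coalescence. -/
noncomputable def CoalSet.basePt (x y : X) : CoalSet H φ hφ X x y :=
  CoalSet.incl H φ hφ X x y y

end HNN


/-! A point `[g, a • x]` of `G ×_A X` over the orbit `A • x` is glued to exactly one point over
`A • y`, namely `[g a t⁻¹, y]`: the choice of `a` does not matter because `A_x = H`, `A_y = φ(H)`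
and `t⁻¹ φ(h) = h t⁻¹`. Sending each point over `A • x` to its partner is a retraction of
`G ×_A X` that is constant on glued pairs, so two points have the same image in `Z` iff their
retractions agree, and both claims become computations in `G ×_A X`, where `[a t⁻¹, y]` is
never a point `[1, s]` of `ι X` because `a t⁻¹ ∉ A`, as the exponent sum of `t` shows. -/

open Function MulAction HNNExtension

theorem Quot.mk_eq_mk_iff_of_retraction {α : Type*} {r : α → α → Prop} (f : α → α)
    (hf : ∀ u v, r u v → f u = f v) (hmk : ∀ u, Quot.mk r (f u) = Quot.mk r u) (u v : α) :
    Quot.mk r u = Quot.mk r v ↔ f u = f v :=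
  ⟨congrArg (Quot.lift f hf), fun h => by rw [← hmk u, ← hmk v, h]⟩

theorem IndRelH.equivalence {A G : Type*} [Group A] [Group G] (ι : A →* G)
    (S : Type*) [MulAction A S] : Equivalence (IndRelH ι S) where
  refl p := ⟨1, by simp⟩
  symm := by
    rintro p q ⟨a, h1, h2⟩
    exact ⟨a⁻¹, by simp [h1], by simp [h2]⟩
  trans := by
    rintro p q r ⟨a, h1, h2⟩ ⟨b, h3, h4⟩
    exact ⟨b * a, by rw [h1, h3, map_mul, mul_assoc], by rw [h4, h2, mul_smul]⟩

namespace IndSetH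

variable {A G : Type*} [Group A] [Group G] {ι : A →* G} {S : Type*} [MulAction A S]

theorem mk_eq_mk_iff {p q : G × S} :
    mk ι S p = mk ι S q ↔ ∃ a, p.1 = q.1 * ι a ∧ q.2 = a • p.2 :=
  Quot.eq.trans (IndRelH.equivalence ι S).eqvGen_iff

theorem mk_mul_smul (g : G) (a : A) (s : S) : mk ι S (g * ι a, s) = mk ι S (g, a • s) :=
  Quot.sound ⟨a, rfl, rfl⟩

theorem smul_mk (g g' : G) (s : S) : g • mk ι S (g', s) = mk ι S (g * g', s) := rfl

theorem stabilizer_mk_one (s : S) : stabilizer G (mk ι S (1, s)) = (stabilizer A s).map ι := by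
  ext g
  simp only [mem_stabilizer_iff, smul_mk, mul_one, mk_eq_mk_iff, one_mul, Subgroup.mem_map]
  exact ⟨fun ⟨a, hg, ha⟩ => ⟨a, ha.symm, hg.symm⟩, fun ⟨a, ha, hg⟩ => ⟨a, hg.symm, ha.symm⟩⟩

theorem mk_inj_right (hι : Injective ι) {g : G} {s s' : S} :
    mk ι S (g, s) = mk ι S (g, s') ↔ s = s' := by
  refine ⟨fun h => ?_, fun h => h ▸ rfl⟩
  obtain ⟨a, hg, hs⟩ := mk_eq_mk_iff.mp h
  dsimp only at hg hs
  have ha : a = 1 := hι (by simpa using hg.symm)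
  rw [hs, ha, one_smul]

end IndSetH

theorem HNNExtension.of_mul_inv_t_ne_of {G : Type*} [Group G] {A B : Subgroup G} {φ : A ≃* B}
    (a b : G) : (of a : HNNExtension G A B φ) * t⁻¹ ≠ of b := by
  intro h
  have := congrArg (lift (1 : G →* Multiplicative ℤ) (.ofAdd 1) (fun _ => by simp)) h
  simp at this

theorem HNNGroup.inv_t_mul_of {A : Type*} [Group A] {H : Subgroup A} {φ : H →* A}
    {hφ : Injective φ} (h : H) : (t⁻¹ * of (φ h) : HNNGroup H φ hφ) = of (h : A) * t⁻¹ := by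
  rw [of_mul_inv_t, MonoidHom.ofInjective_apply]

namespace CoalSet

variable {A : Type*} [Group A] {H : Subgroup A} {φ : H →* A} {hφ : Injective φ}
  {X : Type*} [MulAction A X] {x y : X}

local notation "𝔾" => HNNGroup H φ hφ
local notation "⟪" g ", " s "⟫" => IndSetH.mk (of : A →* HNNGroup H φ hφ) X (g, s)
local notation "ρ" => CoalSet.rho H φ hφ X x y

theorem mk_mul_inv_t_eq_iff (hsx : stabilizer A x = H) (hsy : stabilizer A y = φ.range)
    (g : 𝔾) (a a' : A) : ⟪g * of a * t⁻¹, y⟫ = ⟪g * of a' * t⁻¹, y⟫ ↔ a • x = a' • x := by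
  rw [IndSetH.mk_eq_mk_iff]
  constructor
  · rintro ⟨c, hc, hcy⟩
    obtain ⟨h, rfl⟩ : c ∈ φ.range := hsy ▸ mem_stabilizer_iff.mpr hcy.symm
    dsimp only at hc
    rw [mul_assoc (g * of a'), HNNGroup.inv_t_mul_of, ← mul_assoc, mul_assoc g (of a'),
      ← map_mul] at hc
    have ha : (of a : 𝔾) = of (a' * h) := mul_left_cancel (mul_right_cancel hc)
    rw [of_injective _ ha, mul_smul,
      mem_stabilizer_iff.mp (hsx ▸ h.2 : (h : A) ∈ stabilizer A x)]
  · intro hx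
    have hmem : a'⁻¹ * a ∈ H := hsx ▸ by rw [mem_stabilizer_iff, mul_smul, hx, inv_smul_smul]
    refine ⟨φ ⟨_, hmem⟩, ?_, (mem_stabilizer_iff.mp (hsy ▸ ⟨_, rfl⟩ : _ ∈ stabilizer A y)).symm⟩
    rw [mul_assoc _ t⁻¹, HNNGroup.inv_t_mul_of]
    simp [mul_assoc]

theorem mk_of_mul_inv_t_ne_mk_one (a : A) (s s' : X) : ⟪of a * t⁻¹, s⟫ ≠ ⟪(1 : 𝔾), s'⟫ := by
  rw [Ne, IndSetH.mk_eq_mk_iff]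
  rintro ⟨c, hc, -⟩
  exact of_mul_inv_t_ne_of a c (by simpa using hc)

-- `[g, a • x] = [g a t⁻¹ * t, x]` is glued to `[g a t⁻¹, y]`.
variable (x y) in
open Classical in
noncomputable def retractRep (p : 𝔾 × X) : IndSetH (of : A →* 𝔾) X :=
  if hs : p.2 ∈ orbit A x then ⟪p.1 * of (mem_orbit_iff.mp hs).choose * t⁻¹, y⟫ else ⟪p.1, p.2⟫

theorem retractRep_smul (hsx : stabilizer A x = H) (hsy : stabilizer A y = φ.range)
    (g : 𝔾) (a : A) : retractRep x y (g, a • x) = ⟪g * of a * t⁻¹, y⟫ := by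
  rw [retractRep, dif_pos (mem_orbit x a)]
  exact (mk_mul_inv_t_eq_iff hsx hsy _ _ _).mpr (mem_orbit_iff.mp (mem_orbit x a)).choose_spec

theorem retractRep_of_not_mem {s : X} (hs : s ∉ orbit A x) (g : 𝔾) :
    retractRep x y (g, s) = ⟪g, s⟫ :=
  dif_neg hs

theorem retractRep_eq_of_indRelH (hsx : stabilizer A x = H) (hsy : stabilizer A y = φ.range)
    {p q : 𝔾 × X} (hpq : IndRelH of X p q) : retractRep x y p = retractRep x y q := by
  obtain ⟨g, s⟩ := p
  obtain ⟨g', s'⟩ := q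
  obtain ⟨b, hg, hs⟩ := hpq
  dsimp only at hg hs
  subst hg hs
  by_cases hs : s ∈ orbit A x
  · obtain ⟨a, rfl⟩ := hs
    rw [← mul_smul, retractRep_smul hsx hsy, retractRep_smul hsx hsy, map_mul, ← mul_assoc]
  · have hbs : b • s ∉ orbit A x := by rwa [mem_orbit_symm, orbit_smul, ← mem_orbit_symm]
    rw [retractRep_of_not_mem hs, retractRep_of_not_mem hbs]
    exact IndSetH.mk_mul_smul _ _ _

noncomputable def retract (hsx : stabilizer A x = H) (hsy : stabilizer A y = φ.range) :
    IndSetH (of : A →* 𝔾) X → IndSetH (of : A →* 𝔾) X :=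
  Quot.lift (retractRep x y) fun _ _ => retractRep_eq_of_indRelH hsx hsy

theorem retract_mk (hsx : stabilizer A x = H) (hsy : stabilizer A y = φ.range) (g : 𝔾) (s : X) :
    retract hsx hsy ⟪g, s⟫ = retractRep x y (g, s) :=
  rfl

theorem retract_eq_of_coalRel (horb : y ∉ orbit A x) (hsx : stabilizer A x = H)
    (hsy : stabilizer A y = φ.range) {u v : IndSetH (of : A →* 𝔾) X}
    (huv : CoalRel H φ hφ X x y u v) : retract hsx hsy u = retract hsx hsy v := by
  obtain ⟨g, rfl, rfl⟩ := huv
  have hx := retractRep_smul hsx hsy (g * t) 1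
  rw [one_smul, map_one, mul_one, mul_inv_cancel_right] at hx
  rw [retract_mk, retract_mk, hx, retractRep_of_not_mem horb]

theorem rho_retract (hsx : stabilizer A x = H) (hsy : stabilizer A y = φ.range)
    (u : IndSetH (of : A →* 𝔾) X) : ρ (retract hsx hsy u) = ρ u := by
  obtain ⟨g, s⟩ := u
  by_cases hs : s ∈ orbit A x
  · obtain ⟨a, rfl⟩ := hs
    calc ρ (retract hsx hsy ⟪g, a • x⟫) = ρ ⟪g * of a * t⁻¹, y⟫ := by
          rw [retract_mk, retractRep_smul hsx hsy]
      _ = ρ ⟪g * of a * t⁻¹ * t, x⟫ := (Quot.sound ⟨_, rfl, rfl⟩).symm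
      _ = ρ ⟪g, a • x⟫ := by rw [inv_mul_cancel_right, IndSetH.mk_mul_smul]
  · exact congrArg ρ (retractRep_of_not_mem hs g)

theorem rho_eq_rho_iff (horb : y ∉ orbit A x) (hsx : stabilizer A x = H)
    (hsy : stabilizer A y = φ.range) (u v : IndSetH (of : A →* 𝔾) X) :
    ρ u = ρ v ↔ retract hsx hsy u = retract hsx hsy v :=
  Quot.mk_eq_mk_iff_of_retraction _ (fun _ _ => retract_eq_of_coalRel horb hsx hsy)
    (rho_retract hsx hsy) u v

theorem rho_mk_eq_rho_mk_iff (horb : y ∉ orbit A x) (hsx : stabilizer A x = H)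
    (hsy : stabilizer A y = φ.range) {g g' : 𝔾} {s s' : X} (hs : s ∉ orbit A x)
    (hs' : s' ∉ orbit A x) : ρ ⟪g, s⟫ = ρ ⟪g', s'⟫ ↔ ⟪g, s⟫ = ⟪g', s'⟫ := by
  rw [rho_eq_rho_iff horb hsx hsy, retract_mk, retract_mk, retractRep_of_not_mem hs,
    retractRep_of_not_mem hs']

theorem stabilizer_basePt (horb : y ∉ orbit A x) (hsx : stabilizer A x = H)
    (hsy : stabilizer A y = φ.range) :
    stabilizer 𝔾 (basePt H φ hφ X x y) = φ.range.map (of : A →* 𝔾) := by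
  have h := IndSetH.stabilizer_mk_one (ι := (of : A →* 𝔾)) y
  rw [hsy] at h
  rw [← h]
  ext g
  change ρ ⟪g * 1, y⟫ = ρ ⟪1, y⟫ ↔ ⟪g * 1, y⟫ = ⟪1, y⟫
  rw [mul_one]
  exact rho_mk_eq_rho_mk_iff horb hsx hsy horb horb

theorem incl_injective (horb : y ∉ orbit A x) (hsx : stabilizer A x = H)
    (hsy : stabilizer A y = φ.range) : Injective (incl H φ hφ X x y) := by
  intro s s' h
  change ρ ⟪1, s⟫ = ρ ⟪1, s'⟫ at h
  rw [rho_eq_rho_iff horb hsx hsy, retract_mk, retract_mk] at h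
  by_cases hs : s ∈ orbit A x <;> by_cases hs' : s' ∈ orbit A x
  · obtain ⟨a, rfl⟩ := hs
    obtain ⟨a', rfl⟩ := hs'
    rwa [retractRep_smul hsx hsy, retractRep_smul hsx hsy, mk_mul_inv_t_eq_iff hsx hsy] at h
  · obtain ⟨a, rfl⟩ := hs
    rw [retractRep_smul hsx hsy, retractRep_of_not_mem hs', one_mul] at h
    exact absurd h (mk_of_mul_inv_t_ne_mk_one _ _ _)
  · obtain ⟨a', rfl⟩ := hs'
    rw [retractRep_smul hsx hsy, retractRep_of_not_mem hs, one_mul] at h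
    exact absurd h.symm (mk_of_mul_inv_t_ne_mk_one _ _ _)
  · rwa [retractRep_of_not_mem hs, retractRep_of_not_mem hs',
      IndSetH.mk_inj_right (of_injective _)] at h

end CoalSet

/-- Let `H ≤ A`, `φ : H → A` a monomorphism, `G = A∗_φ` the HNN
extension with stable letter `t`.  Let `X` be an `A`-set and `x, y ∈ X` points in
different `A`-orbits with `A_x = H` and `A_y = φ(H)`.  Let `Z` be the `φ`-coalescence of
`X` w.r.t. `(x, y)` and `z = ρ(ι y)`.  Then (1) the `G`-stabilizer of `z` is `φ(H)`, and
(2) the `A`-map `ȷ : X → Z` is injective. -/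
theorem coalescence_stabilizer_and_incl_injective
    {A : Type*} [Group A] (H : Subgroup A) (φ : ↥H →* A) (hφ : Function.Injective φ)
    (X : Type*) [MulAction A X] (x y : X)
    (horb : y ∉ MulAction.orbit A x)
    (hsx : MulAction.stabilizer A x = H)
    (hsy : MulAction.stabilizer A y = φ.range) :
    MulAction.stabilizer (HNNGroup H φ hφ) (CoalSet.basePt H φ hφ X x y) =
      φ.range.map (HNNExtension.of : A →* HNNGroup H φ hφ) ∧
    Function.Injective (CoalSet.incl H φ hφ X x y) :=
  ⟨CoalSet.stabilizer_basePt horb hsx hsy, CoalSet.incl_injective horb hsx hsy⟩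
end
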